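/- Let T : H → H be a quasi-nonexpansive operator with Fix(T) ≠ ∅ satisfying the demiclosedness principle, let u be a strong global solution of u'(t) = θ(t)(T(u(t)) − u(t)) + f(t), u(t₀) = u₀, and let û ∈ Fix(T) be such that u(t) converges weakly to û. Suppose I − T is metrically subregular at û for 0 with radius r and modulus κ > 0, and that r > lim_{t→∞} ‖u(t) − û‖ (this limit exists). Then there exist t' ≥ t₀ and M₁ > 0 such that for all t ≥ t': dist²(u(t), Fix(T)) ≤ e^{−(1/κ²)∫_{t'}^{t} θ(s) ds} · ( M₁ ∫_{t'}^{t} ‖f(s)‖ e^{(1/κ²)∫_{t'}^{s} θ(x) dx} ds + ‖u(t') − û‖² ). -/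

import Mathlib

/-!
Fix `x ∈ Fix T`. Since `u` is absolutely continuous, on `[s, q]` we have
`‖u q - x‖² = ‖u s - x‖² + 2 ∫ ⟪u - x, u'⟫`. Quasi-nonexpansiveness gives
`2 ⟪u - x, T u - u⟫ ≤ -‖T u - u‖²`, and once `u` stays in the ball of radius `r` around `û`
(eventually true, as `lim ‖u t - û‖ < r`), metric subregularity gives
`‖T u - u‖² ≥ dist²(u, Fix T) / κ²`. For `x` nearly closest to `u s` we have
`2 ‖u τ - x‖ ≤ 2 (3 r + 1) = M₁`, so letting `x` approach the infimum yields, for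
`ψ = dist²(u, Fix T)` and `t' ≤ s ≤ q`,
  `ψ q ≤ ψ s - ∫ₛ^q θ ψ / κ² + M₁ ∫ₛ^q ‖f‖`.
An integral form of Grönwall's lemma turns this into the claim: with `E = exp (∫ θ / κ²)`, the
quantity `E ψ - M₁ ∫ ‖f‖ E` is nonincreasing. As `θ` is only integrable and `ψ` only continuous,
this is shown by continuous induction rather than by differentiating.
-/

open MeasureTheory Filter Set Topology
open scoped RealInnerProductSpace

theorem AbsolutelyContinuousOnInterval.of_dist_le_mul {X Y : Type*} [PseudoMetricSpace X]
    [PseudoMetricSpace Y] {f : ℝ → X} {g : ℝ → Y} {a b : ℝ}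
    (hg : AbsolutelyContinuousOnInterval g a b) (K : ℝ)
    (hfg : ∀ x ∈ uIcc a b, ∀ y ∈ uIcc a b, dist (f x) (f y) ≤ K * dist (g x) (g y)) :
    AbsolutelyContinuousOnInterval f a b := by
  unfold AbsolutelyContinuousOnInterval at hg ⊢
  refine squeeze_zero' (Eventually.of_forall fun _ ↦ Finset.sum_nonneg fun _ _ ↦ dist_nonneg)
    ?_ (by simpa using hg.const_mul K)
  rw [eventually_inf_principal]
  filter_upwards with E hE
  rw [Finset.mul_sum]
  refine Finset.sum_le_sum fun i hi ↦ ?_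
  simp only [AbsolutelyContinuousOnInterval.disjWithin, mem_ofPred_eq] at hE
  exact hfg _ (hE.1 i hi).1 _ (hE.1 i hi).2

theorem norm_add_intervalIntegral_sq {E : Type*} [NormedAddCommGroup E] [InnerProductSpace ℝ E]
    [CompleteSpace E] {v : ℝ → E} {a b : ℝ} (hv : IntervalIntegrable v volume a b) (c : E) :
    ‖c + ∫ τ in a..b, v τ‖ ^ 2 =
      ‖c‖ ^ 2 + ∫ τ in a..b, 2 * ⟪c + ∫ σ in a..τ, v σ, v τ⟫ := by
  set W : ℝ → E := fun t ↦ c + ∫ σ in a..t, v σ with hW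
  have hsub : ∀ x ∈ uIcc a b, ∀ y ∈ uIcc a b, IntervalIntegrable v volume x y :=
    fun x hx y hy ↦ hv.mono_set (uIcc_subset_uIcc hx hy)
  have hWc : ContinuousOn W (uIcc a b) :=
    continuousOn_const.add (intervalIntegral.continuousOn_primitive_interval' hv left_mem_uIcc)
  obtain ⟨C, hC⟩ := isCompact_uIcc.exists_bound_of_continuousOn hWc
  have hac : AbsolutelyContinuousOnInterval (fun t ↦ ‖W t‖ ^ 2) a b := by
    refine (hv.norm.absolutelyContinuousOnInterval_intervalIntegral left_mem_uIcc).of_dist_le_mul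
      (2 * C) fun x hx y hy ↦ ?_
    have hWxy : W x - W y = ∫ σ in y..x, v σ := by
      simp only [hW, add_sub_add_left_eq_sub,
        intervalIntegral.integral_interval_sub_left (hsub a left_mem_uIcc x hx)
          (hsub a left_mem_uIcc y hy)]
    have hNxy : (∫ σ in a..x, ‖v σ‖) - ∫ σ in a..y, ‖v σ‖ = ∫ σ in y..x, ‖v σ‖ :=
      intervalIntegral.integral_interval_sub_left (hsub a left_mem_uIcc x hx).norm
        (hsub a left_mem_uIcc y hy).norm
    rw [Real.dist_eq, Real.dist_eq, hNxy]
    calc |‖W x‖ ^ 2 - ‖W y‖ ^ 2| = |‖W x‖ - ‖W y‖| * (‖W x‖ + ‖W y‖) := by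
          rw [sq_sub_sq, abs_mul, abs_of_nonneg (by positivity : 0 ≤ ‖W x‖ + ‖W y‖), mul_comm]
      _ ≤ ‖W x - W y‖ * (2 * C) := by
          gcongr
          · exact abs_norm_sub_norm_le _ _
          · linarith [hC x hx, hC y hy]
      _ ≤ 2 * C * |∫ σ in y..x, ‖v σ‖| := by
          rw [hWxy, mul_comm]
          gcongr
          · linarith [norm_nonneg (W a), hC a left_mem_uIcc]
          · exact intervalIntegral.norm_integral_le_abs_integral_norm
  have hderiv : ∀ᵐ τ, τ ∈ uIoc a b →
      deriv (fun t ↦ ‖W t‖ ^ 2) τ = 2 * ⟪W τ, v τ⟫ := by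
    filter_upwards [hv.ae_hasDerivAt_integral] with τ hτ hτab
    exact ((hτ (uIoc_subset_uIcc hτab) a left_mem_uIcc).const_add c).norm_sq.deriv
  have hftc := hac.integral_deriv_eq_sub
  rw [intervalIntegral.integral_congr_ae hderiv] at hftc
  simp only [hW, intervalIntegral.integral_same, add_zero] at hftc
  linarith

theorem IntervalIntegrable.continuousOn_inner {E : Type*} [NormedAddCommGroup E]
    [InnerProductSpace ℝ E] {v w : ℝ → E} {a b : ℝ} (hv : IntervalIntegrable v volume a b)
    (hw : ContinuousOn w (uIcc a b)) : IntervalIntegrable (fun τ ↦ ⟪w τ, v τ⟫) volume a b := by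
  obtain ⟨C, hC⟩ := isCompact_uIcc.exists_bound_of_continuousOn hw
  rw [intervalIntegrable_iff] at hv ⊢
  refine Integrable.mono' (hv.norm.const_mul C)
    (((hw.mono uIoc_subset_uIcc).aestronglyMeasurable measurableSet_uIoc).inner
      hv.aestronglyMeasurable) ?_
  refine ae_restrict_of_forall_mem measurableSet_uIoc fun τ hτ ↦ ?_
  exact (norm_inner_le_norm _ _).trans
    (mul_le_mul_of_nonneg_right (hC τ (uIoc_subset_uIcc hτ)) (norm_nonneg _))

theorem eq_add_intervalIntegral_of_forall_eq_add {E : Type*} [NormedAddCommGroup E]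
    [NormedSpace ℝ E] {u v : ℝ → E} {u₀ : E} {t₀ s t : ℝ} (hs : t₀ ≤ s) (hst : s ≤ t)
    (hv : ∀ t, t₀ ≤ t → IntervalIntegrable v volume t₀ t)
    (hu : ∀ t, t₀ ≤ t → u t = u₀ + ∫ σ in t₀..t, v σ) :
    u t = u s + ∫ σ in s..t, v σ := by
  rw [hu t (hs.trans hst), hu s hs, add_assoc,
    intervalIntegral.integral_add_adjacent_intervals (hv s hs) ((hv _ (hs.trans hst)).mono_set
      (by rw [uIcc_of_le hst, uIcc_of_le (hs.trans hst)]; exact Icc_subset_Icc_left hs))]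

theorem continuousOn_of_forall_eq_add_intervalIntegral {E : Type*} [NormedAddCommGroup E]
    [NormedSpace ℝ E] {u v : ℝ → E} {s q : ℝ} (hsq : s ≤ q) (hv : IntervalIntegrable v volume s q)
    (hu : ∀ τ ∈ Icc s q, u τ = u s + ∫ σ in s..τ, v σ) : ContinuousOn u (Icc s q) :=
  (continuousOn_const.add (uIcc_of_le hsq ▸
    intervalIntegral.continuousOn_primitive_interval' hv left_mem_uIcc)).congr hu

theorem image_le_image_left_of_forall_eventually_sub_le {G Φ : ℝ → ℝ} {a b : ℝ} (hab : a ≤ b)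
    (hG : ContinuousOn G (Icc a b)) (hΦ : ContinuousOn Φ (Icc a b))
    (hloc : ∀ c ∈ Ico a b, ∀ ε > 0, ∀ᶠ z in 𝓝[>] c, G z - G c ≤ ε * (Φ z - Φ c)) :
    G b ≤ G a := by
  have hε : ∀ ε > 0, G b - G a ≤ ε * (Φ b - Φ a) := by
    intro ε hε
    set S := {x ∈ Icc a b | G x - G a ≤ ε * (Φ x - Φ a)}
    have hS : IsClosed (S ∩ Icc a b) := by
      rw [inter_eq_left.2 (sep_subset _ _)]
      exact isClosed_Icc.isClosed_le (hG.sub continuousOn_const)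
        (continuousOn_const.mul (hΦ.sub continuousOn_const))
    refine (hS.Icc_subset_of_forall_exists_gt ⟨left_mem_Icc.2 hab, by simp⟩ ?_
      (right_mem_Icc.2 hab)).2
    rintro x ⟨⟨hxab, hx⟩, hxb⟩ y hxy
    obtain ⟨z, hz, hxz, hzy⟩ :=
      ((hloc x hxb ε hε).and (Ioo_mem_nhdsGT (lt_min hxy hxb.2))).exists
    refine ⟨z, ⟨⟨hxab.1.trans hxz.le, hzy.le.trans (min_le_right _ _)⟩, ?_⟩, hxz,
      hzy.le.trans (min_le_left _ _)⟩
    linarith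
  have hlim : Tendsto (fun ε ↦ ε * (Φ b - Φ a)) (𝓝[>] 0) (𝓝 0) := by
    simpa using ((tendsto_id (x := 𝓝 (0 : ℝ))).mul_const (Φ b - Φ a)).mono_left nhdsWithin_le_nhds
  linarith [ge_of_tendsto hlim (eventually_nhdsWithin_of_forall hε)]

theorem ContinuousOn.eventually_forall_Icc_dist_lt {X : Type*} [PseudoMetricSpace X]
    {f : ℝ → X} {a b c ε : ℝ} (hf : ContinuousOn f (Icc a b)) (hc : c ∈ Ico a b) (hε : 0 < ε) :
    ∀ᶠ z in 𝓝[>] c, ∀ τ ∈ Icc c z, dist (f τ) (f c) < ε := by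
  have hIcc : Icc a b ∈ 𝓝[≥] c :=
    mem_of_superset (Icc_mem_nhdsGE hc.2) (Icc_subset_Icc_left hc.1)
  obtain ⟨u, hu, hsub⟩ := mem_nhdsGE_iff_exists_Ico_subset.1 <|
    (hf c (Ico_subset_Icc_self hc)).mono_of_mem_nhdsWithin hIcc (Metric.ball_mem_nhds _ hε)
  filter_upwards [Ioo_mem_nhdsGT hu] with z hz τ hτ using hsub ⟨hτ.1, hτ.2.trans_lt hz.2⟩

theorem exp_sub_exp_le_exp_mul_sub (x y : ℝ) : Real.exp y - Real.exp x ≤ Real.exp y * (y - x) := by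
  have h := Real.add_one_le_exp (x - y)
  rw [Real.exp_sub, le_div_iff₀ (Real.exp_pos y)] at h
  linarith

theorem mul_sub_mul_sub_integral_le_of_integral_ineq {a b ψ E : ℝ → ℝ} {c z ε : ℝ} (hcz : c ≤ z)
    (ha : IntervalIntegrable a volume c z) (hb : IntervalIntegrable b volume c z)
    (haψ : IntervalIntegrable (fun τ ↦ a τ * ψ τ) volume c z)
    (hbE : IntervalIntegrable (fun τ ↦ b τ * E τ) volume c z)
    (ha₀ : ∀ τ ∈ Icc c z, 0 ≤ a τ) (hb₀ : ∀ τ ∈ Icc c z, 0 ≤ b τ) (hψc : 0 ≤ ψ c) (hEz : 0 ≤ E z)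
    (hEa : E z - E c ≤ E z * ∫ τ in c..z, a τ)
    (hψε : ∀ τ ∈ Icc c z, ψ c - ψ τ ≤ ε) (hEε : ∀ τ ∈ Icc c z, E z - E τ ≤ ε)
    (hineq : ψ z ≤ ψ c - (∫ τ in c..z, a τ * ψ τ) + ∫ τ in c..z, b τ) :
    E z * ψ z - E c * ψ c - ∫ τ in c..z, b τ * E τ ≤
      ε * (E z * (∫ τ in c..z, a τ) + ∫ τ in c..z, b τ) := by
  have hψa : (∫ τ in c..z, a τ) * ψ c - (∫ τ in c..z, a τ * ψ τ) ≤ ε * ∫ τ in c..z, a τ := by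
    rw [← intervalIntegral.integral_mul_const, ← intervalIntegral.integral_sub (ha.mul_const _) haψ,
      ← intervalIntegral.integral_const_mul]
    refine intervalIntegral.integral_mono_on hcz ((ha.mul_const _).sub haψ) (ha.const_mul _)
      fun τ hτ ↦ ?_
    nlinarith [ha₀ τ hτ, hψε τ hτ]
  have hbE' : E z * (∫ τ in c..z, b τ) - (∫ τ in c..z, b τ * E τ) ≤ ε * ∫ τ in c..z, b τ := by
    rw [← intervalIntegral.integral_const_mul, ← intervalIntegral.integral_sub (hb.const_mul _) hbE,
      ← intervalIntegral.integral_const_mul]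
    refine intervalIntegral.integral_mono_on hcz ((hb.const_mul _).sub hbE) (hb.const_mul _)
      fun τ hτ ↦ ?_
    nlinarith [hb₀ τ hτ, hEε τ hτ]
  calc E z * ψ z - E c * ψ c - ∫ τ in c..z, b τ * E τ
      ≤ E z * (ψ c - (∫ τ in c..z, a τ * ψ τ) + ∫ τ in c..z, b τ) - E c * ψ c
          - ∫ τ in c..z, b τ * E τ := by gcongr
    _ = (E z - E c) * ψ c - E z * (∫ τ in c..z, a τ * ψ τ)
          + (E z * (∫ τ in c..z, b τ) - ∫ τ in c..z, b τ * E τ) := by ring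
    _ ≤ E z * ((∫ τ in c..z, a τ) * ψ c - ∫ τ in c..z, a τ * ψ τ) + ε * ∫ τ in c..z, b τ := by
        nlinarith [mul_le_mul_of_nonneg_right hEa hψc]
    _ ≤ E z * (ε * ∫ τ in c..z, a τ) + ε * ∫ τ in c..z, b τ := by gcongr
    _ = ε * (E z * (∫ τ in c..z, a τ) + ∫ τ in c..z, b τ) := by ring

theorem exp_integral_mul_sub_integral_le_of_integral_ineq {a b ψ : ℝ → ℝ} {t₁ t₂ : ℝ}
    (h₁₂ : t₁ ≤ t₂) (ha : IntervalIntegrable a volume t₁ t₂)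
    (hb : IntervalIntegrable b volume t₁ t₂)
    (ha₀ : ∀ τ ∈ Icc t₁ t₂, 0 ≤ a τ) (hb₀ : ∀ τ ∈ Icc t₁ t₂, 0 ≤ b τ)
    (hψ : ContinuousOn ψ (Icc t₁ t₂)) (hψ₀ : ∀ τ ∈ Icc t₁ t₂, 0 ≤ ψ τ)
    (hineq : ∀ s ∈ Icc t₁ t₂, ∀ t ∈ Icc s t₂,
      ψ t ≤ ψ s - (∫ τ in s..t, a τ * ψ τ) + ∫ τ in s..t, b τ) :
    Real.exp (∫ τ in t₁..t₂, a τ) * ψ t₂ - (∫ τ in t₁..t₂, b τ * Real.exp (∫ σ in t₁..τ, a σ))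
      ≤ ψ t₁ := by
  have hI : uIcc t₁ t₂ = Icc t₁ t₂ := uIcc_of_le h₁₂
  have hon : ∀ {g : ℝ → ℝ}, IntervalIntegrable g volume t₁ t₂ → ∀ s ∈ Icc t₁ t₂,
      ∀ t ∈ Icc t₁ t₂, IntervalIntegrable g volume s t :=
    fun hg s hs t ht ↦ hg.mono_set (hI ▸ uIcc_subset_Icc hs ht)
  have hincr : ∀ {g : ℝ → ℝ}, IntervalIntegrable g volume t₁ t₂ → ∀ s ∈ Icc t₁ t₂,
      ∀ t ∈ Icc t₁ t₂, (∫ τ in t₁..t, g τ) - (∫ τ in t₁..s, g τ) = ∫ τ in s..t, g τ :=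
    fun hg s hs t ht ↦ intervalIntegral.integral_interval_sub_left
      (hon hg _ (left_mem_Icc.2 h₁₂) _ ht) (hon hg _ (left_mem_Icc.2 h₁₂) _ hs)
  set A : ℝ → ℝ := fun x ↦ ∫ τ in t₁..x, a τ with hA
  set E : ℝ → ℝ := fun x ↦ Real.exp (A x) with hE
  have hAc : ContinuousOn A (Icc t₁ t₂) :=
    hI ▸ intervalIntegral.continuousOn_primitive_interval' ha left_mem_uIcc
  have hEc : ContinuousOn E (Icc t₁ t₂) := Real.continuous_exp.comp_continuousOn hAc
  have hbE : IntervalIntegrable (fun τ ↦ b τ * E τ) volume t₁ t₂ :=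
    hb.mul_continuousOn (hI ▸ hEc)
  have haψ : IntervalIntegrable (fun τ ↦ a τ * ψ τ) volume t₁ t₂ :=
    ha.mul_continuousOn (hI ▸ hψ)
  have hEmono : ∀ s ∈ Icc t₁ t₂, ∀ t ∈ Icc s t₂, E s ≤ E t := by
    intro s hs t ht
    rw [Real.exp_le_exp, ← sub_nonneg, hincr ha s hs t ⟨hs.1.trans ht.1, ht.2⟩]
    exact intervalIntegral.integral_nonneg ht.1 fun τ hτ ↦ ha₀ τ ⟨hs.1.trans hτ.1, hτ.2.trans ht.2⟩
  set G : ℝ → ℝ := fun x ↦ E x * ψ x - ∫ τ in t₁..x, b τ * E τ with hG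
  set Φ : ℝ → ℝ := fun x ↦ E t₂ * A x + ∫ τ in t₁..x, b τ with hΦ
  have hGc : ContinuousOn G (Icc t₁ t₂) := (hEc.mul hψ).sub
    (hI ▸ intervalIntegral.continuousOn_primitive_interval' hbE left_mem_uIcc)
  have hΦc : ContinuousOn Φ (Icc t₁ t₂) := (continuousOn_const.mul hAc).add
    (hI ▸ intervalIntegral.continuousOn_primitive_interval' hb left_mem_uIcc)
  have hG₁ : G t₁ = ψ t₁ := by simp [hG, hE, hA]
  refine hG₁ ▸ image_le_image_left_of_forall_eventually_sub_le h₁₂ hGc hΦc fun c hc ε hε ↦ ?_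
  have hc' : c ∈ Icc t₁ t₂ := Ico_subset_Icc_self hc
  filter_upwards [hψ.eventually_forall_Icc_dist_lt hc hε, hEc.eventually_forall_Icc_dist_lt hc hε,
    Ioc_mem_nhdsGT hc.2] with z hzψ hzE hz
  have hzI : z ∈ Icc t₁ t₂ := ⟨hc.1.trans hz.1.le, hz.2⟩
  have hcz : ∀ τ ∈ Icc c z, τ ∈ Icc t₁ t₂ := fun τ hτ ↦ ⟨hc.1.trans hτ.1, hτ.2.trans hz.2⟩
  have hloc := mul_sub_mul_sub_integral_le_of_integral_ineq (ε := ε) hz.1.le (hon ha c hc' z hzI)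
    (hon hb c hc' z hzI) (hon haψ c hc' z hzI) (hon hbE c hc' z hzI)
    (fun τ hτ ↦ ha₀ τ (hcz τ hτ)) (fun τ hτ ↦ hb₀ τ (hcz τ hτ)) (hψ₀ c hc') (Real.exp_pos _).le
    (hincr ha c hc' z hzI ▸ exp_sub_exp_le_exp_mul_sub _ _)
    (fun τ hτ ↦ by
      have h := hzψ τ hτ
      rw [Real.dist_eq, abs_sub_lt_iff] at h
      linarith)
    (fun τ hτ ↦ by
      have h := hzE z (right_mem_Icc.2 hz.1.le)
      rw [Real.dist_eq, abs_sub_lt_iff] at h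
      linarith [hEmono c hc' τ ⟨hτ.1, hτ.2.trans hz.2⟩])
    (hineq c hc' z ⟨hz.1.le, hz.2⟩)
  have hEz : E z ≤ E t₂ := hEmono z hzI t₂ ⟨hz.2, le_rfl⟩
  have hΔA : 0 ≤ ∫ τ in c..z, a τ :=
    intervalIntegral.integral_nonneg hz.1.le fun τ hτ ↦ ha₀ τ (hcz τ hτ)
  calc G z - G c = E z * ψ z - E c * ψ c - ∫ τ in c..z, b τ * E τ := by
        rw [← hincr hbE c hc' z hzI]; simp only [hG]; ring
    _ ≤ ε * (E t₂ * (∫ τ in c..z, a τ) + ∫ τ in c..z, b τ) := by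
        refine hloc.trans ?_
        gcongr
    _ = ε * (Φ z - Φ c) := by
        rw [← hincr ha c hc' z hzI, ← hincr hb c hc' z hzI]; simp only [hΦ]; ring

theorem le_exp_neg_integral_mul_of_integral_ineq {a b ψ : ℝ → ℝ} {t₁ t₂ : ℝ} (h₁₂ : t₁ ≤ t₂)
    (ha : IntervalIntegrable a volume t₁ t₂) (hb : IntervalIntegrable b volume t₁ t₂)
    (ha₀ : ∀ τ ∈ Icc t₁ t₂, 0 ≤ a τ) (hb₀ : ∀ τ ∈ Icc t₁ t₂, 0 ≤ b τ)
    (hψ : ContinuousOn ψ (Icc t₁ t₂)) (hψ₀ : ∀ τ ∈ Icc t₁ t₂, 0 ≤ ψ τ)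
    (hineq : ∀ s ∈ Icc t₁ t₂, ∀ t ∈ Icc s t₂,
      ψ t ≤ ψ s - (∫ τ in s..t, a τ * ψ τ) + ∫ τ in s..t, b τ) :
    ψ t₂ ≤ Real.exp (-∫ τ in t₁..t₂, a τ) *
      ((∫ τ in t₁..t₂, b τ * Real.exp (∫ σ in t₁..τ, a σ)) + ψ t₁) := by
  have h := exp_integral_mul_sub_integral_le_of_integral_ineq h₁₂ ha hb ha₀ hb₀ hψ hψ₀ hineq
  have hexp : Real.exp (-∫ τ in t₁..t₂, a τ) * Real.exp (∫ τ in t₁..t₂, a τ) = 1 := by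
    rw [← Real.exp_add, neg_add_cancel, Real.exp_zero]
  calc ψ t₂ = Real.exp (-∫ τ in t₁..t₂, a τ) * (Real.exp (∫ τ in t₁..t₂, a τ) * ψ t₂) := by
        rw [← mul_assoc, hexp, one_mul]
    _ ≤ _ := mul_le_mul_of_nonneg_left (by linarith) (Real.exp_pos _).le

theorem le_infDist_sq_of_forall_dist_lt {X : Type*} [PseudoMetricSpace X] {S : Set X} {z : X}
    {c : ℝ} (hS : S.Nonempty) (h : ∀ x ∈ S, dist z x < Metric.infDist z S + 1 → c ≤ dist z x ^ 2) :
    c ≤ Metric.infDist z S ^ 2 := by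
  have hlim : Tendsto (fun ε ↦ (Metric.infDist z S + ε) ^ 2) (𝓝[>] 0)
      (𝓝 (Metric.infDist z S ^ 2)) := by
    refine Tendsto.mono_left ?_ nhdsWithin_le_nhds
    exact (by fun_prop : Continuous fun ε : ℝ ↦ (Metric.infDist z S + ε) ^ 2).tendsto' 0 _
      (by simp)
  refine ge_of_tendsto hlim ?_
  filter_upwards [Ioo_mem_nhdsGT one_pos] with ε hε
  obtain ⟨x, hxS, hx⟩ := (Metric.infDist_lt_iff hS).1 (lt_add_of_pos_right _ hε.1)
  exact (h x hxS (hx.trans (by linarith [hε.2]))).trans (pow_le_pow_left₀ dist_nonneg hx.le 2)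

theorem two_mul_inner_sub_le_of_norm_sub_le {E : Type*} [NormedAddCommGroup E]
    [InnerProductSpace ℝ E] {x y y' g : E} {θ κ d : ℝ} (hy' : ‖y' - x‖ ≤ ‖y - x‖) (hθ : 0 ≤ θ)
    (hκ : 0 < κ) (hd : d ^ 2 ≤ κ ^ 2 * ‖y - y'‖ ^ 2) :
    2 * ⟪y - x, θ • (y' - y) + g⟫ ≤ -(1 / κ ^ 2 * θ) * d ^ 2 + 2 * ‖y - x‖ * ‖g‖ := by
  have hdiss : 2 * ⟪y - x, y' - y⟫ ≤ -‖y - y'‖ ^ 2 := by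
    have h := norm_add_sq_real (y' - y) (y - x)
    rw [sub_add_sub_cancel, norm_sub_rev y' y, real_inner_comm] at h
    nlinarith [pow_le_pow_left₀ (norm_nonneg _) hy' 2]
  have hdκ : 1 / κ ^ 2 * d ^ 2 ≤ ‖y - y'‖ ^ 2 := by
    rw [div_mul_eq_mul_div, one_mul, div_le_iff₀ (by positivity)]
    linarith
  rw [inner_add_right, real_inner_smul_right]
  nlinarith [real_inner_le_norm (y - x) g, mul_le_mul_of_nonneg_left hdκ hθ]

theorem norm_sub_sq_le_sub_integral_of_fixedPoint {H : Type*} [NormedAddCommGroup H]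
    [InnerProductSpace ℝ H] [CompleteSpace H] {T : H → H}
    (hT : ∀ (y x : H), T x = x → ‖T y - x‖ ≤ ‖y - x‖)
    {θ : ℝ → ℝ} {f u : ℝ → H} {uhat x : H} (hx : T x = x) {r κ R : ℝ} (hκ : 0 < κ)
    (hsub : ∀ z : H, ‖z - uhat‖ < r → Metric.infDist z {x : H | T x = x} ≤ κ * ‖z - T z‖)
    {s q : ℝ} (hsq : s ≤ q) (hθ : ∀ τ ∈ Icc s q, 0 ≤ θ τ) (hθint : IntervalIntegrable θ volume s q)
    (hf : IntervalIntegrable (fun τ ↦ ‖f τ‖) volume s q)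
    (hv : IntervalIntegrable (fun τ ↦ θ τ • (T (u τ) - u τ) + f τ) volume s q)
    (hu : ∀ τ ∈ Icc s q, u τ = u s + ∫ σ in s..τ, (θ σ • (T (u σ) - u σ) + f σ))
    (hball : ∀ τ ∈ Icc s q, ‖u τ - uhat‖ < r) (hR : ∀ τ ∈ Icc s q, ‖u τ - x‖ ≤ R) :
    ‖u q - x‖ ^ 2 ≤ ‖u s - x‖ ^ 2
      - (∫ τ in s..q, 1 / κ ^ 2 * θ τ * Metric.infDist (u τ) {x : H | T x = x} ^ 2)
      + ∫ τ in s..q, 2 * R * ‖f τ‖ := by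
  set F := {x : H | T x = x}
  set v : ℝ → H := fun τ ↦ θ τ • (T (u τ) - u τ) + f τ
  have hI : uIcc s q = Icc s q := uIcc_of_le hsq
  have hucont : ContinuousOn u (Icc s q) := continuousOn_of_forall_eq_add_intervalIntegral hsq hv hu
  have hψint : IntervalIntegrable (fun τ ↦ 1 / κ ^ 2 * θ τ * Metric.infDist (u τ) F ^ 2)
      volume s q :=
    (hθint.const_mul _).mul_continuousOn
      (hI ▸ ((Metric.continuous_infDist_pt F).comp_continuousOn hucont).pow 2)
  have hpt : ∀ τ ∈ Icc s q, 2 * ⟪u τ - x, v τ⟫ ≤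
      2 * R * ‖f τ‖ - 1 / κ ^ 2 * θ τ * Metric.infDist (u τ) F ^ 2 := by
    intro τ hτ
    have hd : Metric.infDist (u τ) F ^ 2 ≤ κ ^ 2 * ‖u τ - T (u τ)‖ ^ 2 := by
      rw [← mul_pow]
      exact pow_le_pow_left₀ Metric.infDist_nonneg (hsub _ (hball τ hτ)) 2
    have := two_mul_inner_sub_le_of_norm_sub_le (g := f τ) (hT (u τ) x hx) (hθ τ hτ) hκ hd
    nlinarith [hR τ hτ, norm_nonneg (f τ)]
  have henergy := norm_add_intervalIntegral_sq hv (u s - x)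
  rw [intervalIntegral.integral_congr (g := fun τ ↦ 2 * ⟪u τ - x, v τ⟫) fun τ hτ ↦ by
    simp only [v, hu τ (hI ▸ hτ)]; congr 2; abel] at henergy
  have huq : u s - x + ∫ τ in s..q, v τ = u q - x := by rw [hu q (right_mem_Icc.2 hsq)]; abel
  have hw : ContinuousOn (fun τ ↦ u τ - x) (uIcc s q) := hI ▸ hucont.sub continuousOn_const
  have hmono := intervalIntegral.integral_mono_on hsq ((hv.continuousOn_inner hw).const_mul 2)
    ((hf.const_mul _).sub hψint) hpt
  rw [intervalIntegral.integral_sub (hf.const_mul _) hψint] at hmono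
  rw [huq] at henergy
  linarith

theorem infDist_fixedPoints_sq_le_sub_integral {H : Type*} [NormedAddCommGroup H]
    [InnerProductSpace ℝ H] [CompleteSpace H] {T : H → H}
    (hT : ∀ (y x : H), T x = x → ‖T y - x‖ ≤ ‖y - x‖)
    {θ : ℝ → ℝ} {f u : ℝ → H} {uhat : H} (huhat : T uhat = uhat) {r κ : ℝ} (hκ : 0 < κ)
    (hsub : ∀ z : H, ‖z - uhat‖ < r → Metric.infDist z {x : H | T x = x} ≤ κ * ‖z - T z‖)
    {s q : ℝ} (hsq : s ≤ q) (hθ : ∀ τ ∈ Icc s q, 0 ≤ θ τ) (hθint : IntervalIntegrable θ volume s q)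
    (hf : IntervalIntegrable (fun τ ↦ ‖f τ‖) volume s q)
    (hv : IntervalIntegrable (fun τ ↦ θ τ • (T (u τ) - u τ) + f τ) volume s q)
    (hu : ∀ τ ∈ Icc s q, u τ = u s + ∫ σ in s..τ, (θ σ • (T (u σ) - u σ) + f σ))
    (hball : ∀ τ ∈ Icc s q, ‖u τ - uhat‖ < r) :
    Metric.infDist (u q) {x : H | T x = x} ^ 2 ≤ Metric.infDist (u s) {x : H | T x = x} ^ 2
      - (∫ τ in s..q, 1 / κ ^ 2 * θ τ * Metric.infDist (u τ) {x : H | T x = x} ^ 2)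
      + ∫ τ in s..q, 2 * (3 * r + 1) * ‖f τ‖ := by
  set F := {x : H | T x = x}
  have hs : s ∈ Icc s q := left_mem_Icc.2 hsq
  have hsF : Metric.infDist (u s) F < r :=
    (Metric.infDist_le_dist_of_mem (show uhat ∈ F from huhat)).trans_lt
      (by rw [dist_eq_norm]; exact hball s hs)
  suffices ∀ x ∈ F, dist (u s) x < Metric.infDist (u s) F + 1 →
      Metric.infDist (u q) F ^ 2 + (∫ τ in s..q, 1 / κ ^ 2 * θ τ * Metric.infDist (u τ) F ^ 2)
        - ∫ τ in s..q, 2 * (3 * r + 1) * ‖f τ‖ ≤ dist (u s) x ^ 2 by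
    linarith [le_infDist_sq_of_forall_dist_lt (S := F) ⟨uhat, huhat⟩ this]
  intro x hx hxs
  rw [dist_eq_norm] at hxs ⊢
  have hR : ∀ τ ∈ Icc s q, ‖u τ - x‖ ≤ 3 * r + 1 := by
    intro τ hτ
    calc ‖u τ - x‖ ≤ ‖u τ - uhat‖ + ‖u s - uhat‖ + ‖u s - x‖ := by
          rw [← norm_neg (u s - uhat)]
          refine (norm_sub_le_norm_sub_add_norm_sub _ (u s) _).trans ?_
          gcongr
          simpa using norm_sub_le_norm_sub_add_norm_sub (u τ) uhat (u s)
      _ ≤ 3 * r + 1 := by linarith [hball τ hτ, hball s hs]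
  have hq : Metric.infDist (u q) F ^ 2 ≤ ‖u q - x‖ ^ 2 := by
    rw [← dist_eq_norm]
    exact pow_le_pow_left₀ Metric.infDist_nonneg (Metric.infDist_le_dist_of_mem hx) 2
  linarith [norm_sub_sq_le_sub_integral_of_fixedPoint hT hx hκ hsub hsq hθ hθint hf hv hu hball hR]

theorem infDist_fixedPoints_sq_le_exp_neg_integral_mul {H : Type*} [NormedAddCommGroup H]
    [InnerProductSpace ℝ H] [CompleteSpace H] {T : H → H}
    (hT : ∀ (y x : H), T x = x → ‖T y - x‖ ≤ ‖y - x‖)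
    {θ : ℝ → ℝ} {f u : ℝ → H} {uhat : H} (huhat : T uhat = uhat) {r κ : ℝ} (hκ : 0 < κ)
    (hsub : ∀ z : H, ‖z - uhat‖ < r → Metric.infDist z {x : H | T x = x} ≤ κ * ‖z - T z‖)
    {t₁ t₂ : ℝ} (h₁₂ : t₁ ≤ t₂) (hθ : ∀ τ ∈ Icc t₁ t₂, 0 ≤ θ τ)
    (hθint : IntervalIntegrable θ volume t₁ t₂)
    (hf : IntervalIntegrable (fun τ ↦ ‖f τ‖) volume t₁ t₂)
    (hv : IntervalIntegrable (fun τ ↦ θ τ • (T (u τ) - u τ) + f τ) volume t₁ t₂)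
    (hu : ∀ s ∈ Icc t₁ t₂, ∀ τ ∈ Icc s t₂,
      u τ = u s + ∫ σ in s..τ, (θ σ • (T (u σ) - u σ) + f σ))
    (hball : ∀ τ ∈ Icc t₁ t₂, ‖u τ - uhat‖ < r) :
    Metric.infDist (u t₂) {x : H | T x = x} ^ 2 ≤
      Real.exp (-(1 / κ ^ 2) * ∫ s in t₁..t₂, θ s) *
        (2 * (3 * r + 1) * (∫ s in t₁..t₂, ‖f s‖ * Real.exp ((1 / κ ^ 2) * ∫ x in t₁..s, θ x))
          + ‖u t₁ - uhat‖ ^ 2) := by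
  set F := {x : H | T x = x}
  have hr : 0 < r := (norm_nonneg _).trans_lt (hball t₁ (left_mem_Icc.2 h₁₂))
  have hI : ∀ s ∈ Icc t₁ t₂, ∀ q ∈ Icc s t₂, uIcc s q ⊆ uIcc t₁ t₂ :=
    fun s hs q hq ↦ uIcc_of_le h₁₂ ▸ uIcc_subset_Icc hs ⟨hs.1.trans hq.1, hq.2⟩
  have hgron := le_exp_neg_integral_mul_of_integral_ineq (a := fun τ ↦ 1 / κ ^ 2 * θ τ)
    (b := fun τ ↦ 2 * (3 * r + 1) * ‖f τ‖) (ψ := fun τ ↦ Metric.infDist (u τ) F ^ 2) h₁₂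
    (hθint.const_mul _) (hf.const_mul _)
    (fun τ hτ ↦ mul_nonneg (by positivity) (hθ τ hτ)) (fun τ _ ↦ by positivity)
    (((Metric.continuous_infDist_pt F).comp_continuousOn
      (continuousOn_of_forall_eq_add_intervalIntegral h₁₂ hv (hu t₁ (left_mem_Icc.2 h₁₂)))).pow 2)
    (fun τ _ ↦ by positivity)
    fun s hs q hq ↦ infDist_fixedPoints_sq_le_sub_integral hT huhat hκ hsub hq.1
      (fun τ hτ ↦ hθ τ ⟨hs.1.trans hτ.1, hτ.2.trans hq.2⟩)
      (hθint.mono_set (hI s hs q hq)) (hf.mono_set (hI s hs q hq)) (hv.mono_set (hI s hs q hq))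
      (fun τ hτ ↦ hu s hs τ ⟨hτ.1, hτ.2.trans hq.2⟩)
      (fun τ hτ ↦ hball τ ⟨hs.1.trans hτ.1, hτ.2.trans hq.2⟩)
  have hA : ∀ x, ∫ σ in t₁..x, 1 / κ ^ 2 * θ σ = 1 / κ ^ 2 * ∫ σ in t₁..x, θ σ :=
    fun x ↦ intervalIntegral.integral_const_mul _ _
  have hB : ∫ τ in t₁..t₂, 2 * (3 * r + 1) * ‖f τ‖ * Real.exp (1 / κ ^ 2 * ∫ σ in t₁..τ, θ σ) =
      2 * (3 * r + 1) * ∫ τ in t₁..t₂, ‖f τ‖ * Real.exp (1 / κ ^ 2 * ∫ σ in t₁..τ, θ σ) := by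
    rw [← intervalIntegral.integral_const_mul]; simp_rw [mul_assoc]
  simp only [hA, hB] at hgron
  refine hgron.trans ?_
  rw [neg_mul]
  gcongr
  · exact Metric.infDist_nonneg
  · exact dist_eq_norm (u t₁) uhat ▸ Metric.infDist_le_dist_of_mem (show uhat ∈ F from huhat)

theorem stmt_6_general
    {H : Type*} [NormedAddCommGroup H] [InnerProductSpace ℝ H] [CompleteSpace H]
    (T : H → H)
    (hT : ∀ (y x : H), T x = x → ‖T y - x‖ ≤ ‖y - x‖)
    (t₀ : ℝ)
    (θ : ℝ → ℝ) (hθ : ∀ t, t₀ ≤ t → 0 ≤ θ t)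
    (hθint : ∀ b : ℝ, IntervalIntegrable θ volume t₀ b)
    (f : ℝ → H)
    (hfint : IntegrableOn (fun s => ‖f s‖) (Set.Ici t₀))
    (u : ℝ → H) (u₀ : H)
    (huint : ∀ t, t₀ ≤ t →
      IntervalIntegrable (fun s => θ s • (T (u s) - u s) + f s) volume t₀ t)
    (husol : ∀ t, t₀ ≤ t →
      u t = u₀ + ∫ s in t₀..t, (θ s • (T (u s) - u s) + f s))
    (uhat : H) (huhat : T uhat = uhat)
    (r κ : ℝ) (hr : 0 < r) (hκ : 0 < κ)
    (hsub : ∀ z : H, ‖z - uhat‖ < r →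
      Metric.infDist z {x : H | T x = x} ≤ κ * ‖z - T z‖)
    (L : ℝ) (hlim : Tendsto (fun t => ‖u t - uhat‖) atTop (nhds L)) (hLr : L < r) :
    ∃ t' M₁ : ℝ, t₀ ≤ t' ∧ 0 < M₁ ∧ ∀ t, t' ≤ t →
      Metric.infDist (u t) {x : H | T x = x} ^ 2 ≤
        Real.exp (-(1 / κ ^ 2) * ∫ s in t'..t, θ s) *
          (M₁ * (∫ s in t'..t, ‖f s‖ * Real.exp ((1 / κ ^ 2) * ∫ x in t'..s, θ x))
            + ‖u t' - uhat‖ ^ 2) := by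
  obtain ⟨t₁, ht₁⟩ := eventually_atTop.1 (hlim.eventually_lt_const hLr)
  have ht₀ : t₀ ≤ max t₀ t₁ := le_max_left _ _
  refine ⟨max t₀ t₁, 2 * (3 * r + 1), ht₀, by linarith, fun t ht ↦ ?_⟩
  have hI : uIcc (max t₀ t₁) t ⊆ uIcc t₀ t := by
    rw [uIcc_of_le ht, uIcc_of_le (ht₀.trans ht)]
    exact Icc_subset_Icc_left ht₀
  exact infDist_fixedPoints_sq_le_exp_neg_integral_mul hT huhat hκ hsub ht
    (fun τ hτ ↦ hθ τ (ht₀.trans hτ.1)) ((hθint t).mono_set hI)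
    ((intervalIntegrable_iff_integrableOn_Icc_of_le ht).2
      (hfint.mono_set (Icc_subset_Ici_iff ht |>.2 ht₀)))
    ((huint t (ht₀.trans ht)).mono_set hI)
    (fun s hs τ hτ ↦ eq_add_intervalIntegral_of_forall_eq_add (ht₀.trans hs.1) hτ.1 huint husol)
    (fun τ hτ ↦ ht₁ τ ((le_max_right _ _).trans hτ.1))

theorem stmt_6
    {H : Type*} [NormedAddCommGroup H] [InnerProductSpace ℝ H] [CompleteSpace H]
    (T : H → H)
    (hT : ∀ (y x : H), T x = x → ‖T y - x‖ ≤ ‖y - x‖)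
    (hfix : ∃ x : H, T x = x)
    (hdemi : ∀ (x : ℕ → H) (p : H),
      (∀ y : H, Tendsto (fun k => ⟪x k, y⟫) atTop (nhds ⟪p, y⟫)) →
      Tendsto (fun k => ‖T (x k) - x k‖) atTop (nhds 0) → T p = p)
    (t₀ : ℝ) (ht₀ : 0 < t₀)
    (θ : ℝ → ℝ) (hθ : ∀ t, t₀ ≤ t → 0 ≤ θ t)
    (hθint : ∀ b : ℝ, IntervalIntegrable θ volume t₀ b)
    (f : ℝ → H)
    (hfint : IntegrableOn (fun s => ‖f s‖) (Set.Ici t₀))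
    (u : ℝ → H) (u₀ : H)
    (huint : ∀ t, t₀ ≤ t →
      IntervalIntegrable (fun s => θ s • (T (u s) - u s) + f s) volume t₀ t)
    (husol : ∀ t, t₀ ≤ t →
      u t = u₀ + ∫ s in t₀..t, (θ s • (T (u s) - u s) + f s))
    (uhat : H) (huhat : T uhat = uhat)
    (hweak : ∀ y : H, Tendsto (fun t => ⟪u t, y⟫) atTop (nhds ⟪uhat, y⟫))
    (r κ : ℝ) (hr : 0 < r) (hκ : 0 < κ)
    (hsub : ∀ z : H, ‖z - uhat‖ < r →
      Metric.infDist z {x : H | T x = x} ≤ κ * ‖z - T z‖)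
    (L : ℝ) (hlim : Tendsto (fun t => ‖u t - uhat‖) atTop (nhds L)) (hLr : L < r) :
    ∃ t' M₁ : ℝ, t₀ ≤ t' ∧ 0 < M₁ ∧ ∀ t, t' ≤ t →
      Metric.infDist (u t) {x : H | T x = x} ^ 2 ≤
        Real.exp (-(1 / κ ^ 2) * ∫ s in t'..t, θ s) *
          (M₁ * (∫ s in t'..t, ‖f s‖ * Real.exp ((1 / κ ^ 2) * ∫ x in t'..s, θ x))
            + ‖u t' - uhat‖ ^ 2) :=
  stmt_6_general T hT t₀ θ hθ hθint f hfint u u₀ huint husol uhat huhat r κ hr hκ hsub L hlim hLr
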